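/- The conditional Mean Flow loss decomposes as L_CMF(θ) = L_MF(θ) + 𝔼[‖(z₁ − z₀) − v_s(z_s)‖²], where the second term does not depend on the parameters θ; consequently ∇_θ L_CMF = ∇_θ L_MF, i.e., the two losses have identical gradients with respect to the model parameters. -/

import Mathlib

open MeasureTheory ProbabilityTheory

noncomputable section

attribute [local instance] MeasureTheory.Measure.isFiniteMeasure_map

/-- Euclidean space `ℝ^d`. -/
abbrev Euc (d : ℕ) := EuclideanSpace ℝ (Fin d)

/-- Joint law of `(z_s, z₁ - z₀)` for the straight-line interpolant. -/
def interpJoint {d : ℕ} (ρ₀ ρ₁ : Measure (Euc d)) (s : ℝ) : Measure (Euc d × Euc d) :=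
  (ρ₀.prod ρ₁).map (fun q => ((1 - s) • q.1 + s • q.2, q.2 - q.1))

instance {d : ℕ} (ρ₀ ρ₁ : Measure (Euc d)) [IsFiniteMeasure ρ₀] [IsFiniteMeasure ρ₁]
    (s : ℝ) : IsFiniteMeasure (interpJoint ρ₀ ρ₁ s) :=
  Measure.isFiniteMeasure_map _ _

/-- The marginal velocity `v_s(z) = 𝔼[z₁ - z₀ | z_s = z]`. -/
def margVel {d : ℕ} (ρ₀ ρ₁ : Measure (Euc d)) [IsProbabilityMeasure ρ₀]
    [IsProbabilityMeasure ρ₁] (s : ℝ) (z : Euc d) : Euc d :=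
  ∫ w, w ∂((interpJoint ρ₀ ρ₁ s).condKernel z)

/-- Total derivative `(d/ds) u(z_s, r, s) = (∂u/∂z) v_s(z_s) + ∂u/∂s` along the flow. -/
def totalDeriv {d : ℕ} (u : Euc d → ℝ → ℝ → Euc d) (v : ℝ → Euc d → Euc d)
    (z : Euc d) (r s : ℝ) : Euc d :=
  fderiv ℝ (fun w => u w r s) z (v s z) + deriv (fun τ => u z r τ) s

/-- A sample point `ω = ((z₀, z₁), (r, s))`. -/
abbrev Sample (d : ℕ) := (Euc d × Euc d) × ℝ × ℝ

/-- The interpolant `z_s = (1 − s) z₀ + s z₁` evaluated at a sample point. -/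
def zsOf {d : ℕ} (ω : Sample d) : Euc d := (1 - ω.2.2) • ω.1.1 + ω.2.2 • ω.1.2

/-- The Mean Flow loss `L_MF(θ; θ̄)`, where the stop-gradient is modeled by evaluating
the target at an independent parameter copy `θ̄` (which is not differentiated). -/
def lossMF {d : ℕ} {Θ : Type*} (ρ₀ ρ₁ : Measure (Euc d)) [IsProbabilityMeasure ρ₀]
    [IsProbabilityMeasure ρ₁] (π : Measure (ℝ × ℝ))
    (u : Θ → Euc d → ℝ → ℝ → Euc d) (θ θsg : Θ) : ℝ :=
  ∫ ω : Sample d,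
    ‖u θ (zsOf ω) ω.2.1 ω.2.2 - (margVel ρ₀ ρ₁ ω.2.2 (zsOf ω)
      - (ω.2.2 - ω.2.1) • totalDeriv (u θsg) (margVel ρ₀ ρ₁) (zsOf ω) ω.2.1 ω.2.2)‖ ^ 2
    ∂((ρ₀.prod ρ₁).prod π)

/-- The conditional Mean Flow loss `L_CMF(θ; θ̄)`, with the stop-gradient modeled by an
independent parameter copy `θ̄`. -/
def lossCMF {d : ℕ} {Θ : Type*} (ρ₀ ρ₁ : Measure (Euc d)) [IsProbabilityMeasure ρ₀]
    [IsProbabilityMeasure ρ₁] (π : Measure (ℝ × ℝ))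
    (u : Θ → Euc d → ℝ → ℝ → Euc d) (θ θsg : Θ) : ℝ :=
  ∫ ω : Sample d,
    ‖u θ (zsOf ω) ω.2.1 ω.2.2 - ((ω.1.2 - ω.1.1)
      - (ω.2.2 - ω.2.1) • totalDeriv (u θsg) (margVel ρ₀ ρ₁) (zsOf ω) ω.2.1 ω.2.2)‖ ^ 2
    ∂((ρ₀.prod ρ₁).prod π)

/-!
The CMF residual is the MF residual minus the velocity residual `(z₁ - z₀) - v_s(z_s)`. The MF
residual depends on the sample only through `(r, s)` and `z_s`, while `v_s(z_s)` is the mean of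
`z₁ - z₀` under the disintegration of the joint law of `(z_s, z₁ - z₀)` along `z_s`; hence the two
residuals are orthogonal in `L²`, and expanding the square gives the decomposition, whose last
term does not depend on `θ`. As `(z₀, z₁) ↦ (z_s, z₁ - z₀)` is a linear automorphism, integrals
move to the joint law without any measurability assumption on the integrands.
-/

open scoped InnerProductSpace

theorem integral_inner_sub_integral_condKernel_eq_zero {α E : Type*} {_ : MeasurableSpace α}
    [NormedAddCommGroup E] [InnerProductSpace ℝ E] [CompleteSpace E] [MeasurableSpace E]
    [StandardBorelSpace E] [Nonempty E] {ρ : Measure (α × E)} [IsFiniteMeasure ρ]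
    (hρ : Integrable Prod.snd ρ) (φ : α → E)
    (hφ : Integrable (fun x => ⟪φ x.1, x.2 - ∫ w, w ∂ρ.condKernel x.1⟫_ℝ) ρ) :
    ∫ x, ⟪φ x.1, x.2 - ∫ w, w ∂ρ.condKernel x.1⟫_ℝ ∂ρ = 0 := by
  rw [← Measure.integral_condKernel hφ]
  refine integral_eq_zero_of_ae ?_
  filter_upwards [hρ.condKernel_ae] with a ha
  have hcentered : Integrable (fun w => w - ∫ w, w ∂ρ.condKernel a) (ρ.condKernel a) :=
    ha.sub (integrable_const _)
  rw [Pi.zero_apply, integral_inner hcentered, integral_sub ha (integrable_const _),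
    integral_const]
  simp

theorem measurableEmbedding_interp {E : Type*} [NormedAddCommGroup E] [NormedSpace ℝ E]
    [MeasurableSpace E] [BorelSpace E] [SecondCountableTopology E] (s : ℝ) :
    MeasurableEmbedding (fun q : E × E => ((1 - s) • q.1 + s • q.2, q.2 - q.1)) :=
  let e : E × E ≃ₜ E × E :=
    { toFun q := ((1 - s) • q.1 + s • q.2, q.2 - q.1)
      invFun p := (p.1 - s • p.2, p.1 + (1 - s) • p.2)
      left_inv q := by ext <;> simp <;> module
      right_inv p := by ext <;> simp <;> module
      continuous_toFun := by fun_prop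
      continuous_invFun := by fun_prop }
  e.measurableEmbedding

theorem integrable_id_of_integrable_norm_sq {E : Type*} [NormedAddCommGroup E]
    [MeasurableSpace E] [BorelSpace E] [SecondCountableTopology E] {μ : Measure E}
    [IsFiniteMeasure μ] (hμ : Integrable (fun z => ‖z‖ ^ 2) μ) : Integrable (fun z => z) μ :=
  ((memLp_two_iff_integrable_sq_norm aestronglyMeasurable_id).2 hμ).integrable one_le_two

theorem integrable_snd_interpJoint {d : ℕ} {ρ₀ ρ₁ : Measure (Euc d)}
    [IsProbabilityMeasure ρ₀] [IsProbabilityMeasure ρ₁]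
    (h₀ : Integrable (fun z => z) ρ₀) (h₁ : Integrable (fun z => z) ρ₁) (s : ℝ) :
    Integrable Prod.snd (interpJoint ρ₀ ρ₁ s) := by
  rw [interpJoint, (measurableEmbedding_interp s).integrable_map_iff]
  exact (h₁.comp_snd ρ₀).sub (h₀.comp_fst ρ₁)

theorem integral_inner_sub_margVel_eq_zero {d : ℕ} {ρ₀ ρ₁ : Measure (Euc d)}
    [IsProbabilityMeasure ρ₀] [IsProbabilityMeasure ρ₁]
    (h₀ : Integrable (fun z => z) ρ₀) (h₁ : Integrable (fun z => z) ρ₁) (s : ℝ)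
    (φ : Euc d → Euc d)
    (hφ : Integrable (fun q : Euc d × Euc d =>
      ⟪φ ((1 - s) • q.1 + s • q.2), (q.2 - q.1) - margVel ρ₀ ρ₁ s ((1 - s) • q.1 + s • q.2)⟫_ℝ)
      (ρ₀.prod ρ₁)) :
    ∫ q : Euc d × Euc d,
      ⟪φ ((1 - s) • q.1 + s • q.2), (q.2 - q.1) - margVel ρ₀ ρ₁ s ((1 - s) • q.1 + s • q.2)⟫_ℝ
      ∂(ρ₀.prod ρ₁) = 0 := by
  let g : Euc d × Euc d → ℝ := fun x => ⟪φ x.1, x.2 - margVel ρ₀ ρ₁ s x.1⟫_ℝ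
  have hinterp := measurableEmbedding_interp (E := Euc d) s
  have hg : Integrable g (interpJoint ρ₀ ρ₁ s) := hinterp.integrable_map_iff.mpr hφ
  calc _ = ∫ x, g x ∂(interpJoint ρ₀ ρ₁ s) := (hinterp.integral_map g).symm
    _ = 0 := integral_inner_sub_integral_condKernel_eq_zero
      (integrable_snd_interpJoint h₀ h₁ s) φ hg

theorem integral_inner_sub_margVel_zsOf_eq_zero {d : ℕ} {ρ₀ ρ₁ : Measure (Euc d)}
    [IsProbabilityMeasure ρ₀] [IsProbabilityMeasure ρ₁]
    (h₀ : Integrable (fun z => z) ρ₀) (h₁ : Integrable (fun z => z) ρ₁)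
    {π : Measure (ℝ × ℝ)} [SFinite π] (Φ : ℝ × ℝ → Euc d → Euc d)
    (hΦ : Integrable (fun ω : Sample d =>
      ⟪Φ ω.2 (zsOf ω), (ω.1.2 - ω.1.1) - margVel ρ₀ ρ₁ ω.2.2 (zsOf ω)⟫_ℝ) ((ρ₀.prod ρ₁).prod π)) :
    ∫ ω : Sample d, ⟪Φ ω.2 (zsOf ω), (ω.1.2 - ω.1.1) - margVel ρ₀ ρ₁ ω.2.2 (zsOf ω)⟫_ℝ
      ∂((ρ₀.prod ρ₁).prod π) = 0 := by
  rw [integral_prod_symm _ hΦ]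
  refine integral_eq_zero_of_ae ?_
  filter_upwards [hΦ.prod_left_ae] with p hp
  exact integral_inner_sub_margVel_eq_zero h₀ h₁ p.2 (Φ p) hp

theorem integrable_inner_of_integrable_norm_sq {Ω E : Type*} [MeasurableSpace Ω]
    {μ : Measure Ω} [NormedAddCommGroup E] [InnerProductSpace ℝ E] {f g : Ω → E}
    (hf : Integrable (fun ω => ‖f ω‖ ^ 2) μ) (hg : Integrable (fun ω => ‖g ω‖ ^ 2) μ)
    (hfg : Integrable (fun ω => ‖f ω - g ω‖ ^ 2) μ) :
    Integrable (fun ω => ⟪f ω, g ω⟫_ℝ) μ := by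
  have polarization : (fun ω => ⟪f ω, g ω⟫_ℝ)
      = fun ω => (‖f ω‖ ^ 2 + ‖g ω‖ ^ 2 - ‖f ω - g ω‖ ^ 2) / 2 := by
    funext ω; rw [norm_sub_sq_real]; ring
  rw [polarization]
  exact ((hf.add hg).sub hfg).div_const 2

theorem integral_norm_sub_sq_of_integral_inner_eq_zero {Ω E : Type*} [MeasurableSpace Ω]
    {μ : Measure Ω} [NormedAddCommGroup E] [InnerProductSpace ℝ E] {f g : Ω → E}
    (hf : Integrable (fun ω => ‖f ω‖ ^ 2) μ) (hg : Integrable (fun ω => ‖g ω‖ ^ 2) μ)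
    (hfg : Integrable (fun ω => ⟪f ω, g ω⟫_ℝ) μ) (horth : ∫ ω, ⟪f ω, g ω⟫_ℝ ∂μ = 0) :
    ∫ ω, ‖f ω - g ω‖ ^ 2 ∂μ = ∫ ω, ‖f ω‖ ^ 2 ∂μ + ∫ ω, ‖g ω‖ ^ 2 ∂μ := by
  have hf_sub : Integrable (fun ω => ‖f ω‖ ^ 2 - 2 * ⟪f ω, g ω⟫_ℝ) μ :=
    hf.sub (hfg.const_mul 2)
  simp_rw [norm_sub_sq_real]
  rw [integral_add hf_sub hg, integral_sub hf (hfg.const_mul 2),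
    integral_const_mul, horth, mul_zero, sub_zero]

theorem lossCMF_eq_lossMF_add {d : ℕ} {Θ : Type*} {ρ₀ ρ₁ : Measure (Euc d)}
    [IsProbabilityMeasure ρ₀] [IsProbabilityMeasure ρ₁]
    (h₀ : Integrable (fun z => z) ρ₀) (h₁ : Integrable (fun z => z) ρ₁)
    {π : Measure (ℝ × ℝ)} [SFinite π] (u : Θ → Euc d → ℝ → ℝ → Euc d) (θ θsg : Θ)
    (hMF : Integrable (fun ω : Sample d =>
      ‖u θ (zsOf ω) ω.2.1 ω.2.2 - (margVel ρ₀ ρ₁ ω.2.2 (zsOf ω)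
        - (ω.2.2 - ω.2.1) • totalDeriv (u θsg) (margVel ρ₀ ρ₁) (zsOf ω) ω.2.1 ω.2.2)‖ ^ 2)
      ((ρ₀.prod ρ₁).prod π))
    (hCMF : Integrable (fun ω : Sample d =>
      ‖u θ (zsOf ω) ω.2.1 ω.2.2 - ((ω.1.2 - ω.1.1)
        - (ω.2.2 - ω.2.1) • totalDeriv (u θsg) (margVel ρ₀ ρ₁) (zsOf ω) ω.2.1 ω.2.2)‖ ^ 2)
      ((ρ₀.prod ρ₁).prod π))
    (hRes : Integrable (fun ω : Sample d =>
      ‖(ω.1.2 - ω.1.1) - margVel ρ₀ ρ₁ ω.2.2 (zsOf ω)‖ ^ 2) ((ρ₀.prod ρ₁).prod π)) :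
    lossCMF ρ₀ ρ₁ π u θ θsg = lossMF ρ₀ ρ₁ π u θ θsg
      + ∫ ω : Sample d, ‖(ω.1.2 - ω.1.1) - margVel ρ₀ ρ₁ ω.2.2 (zsOf ω)‖ ^ 2
          ∂((ρ₀.prod ρ₁).prod π) := by
  let mfResidual (p : ℝ × ℝ) (z : Euc d) : Euc d := u θ z p.1 p.2
    - (margVel ρ₀ ρ₁ p.2 z - (p.2 - p.1) • totalDeriv (u θsg) (margVel ρ₀ ρ₁) z p.1 p.2)
  have hsplit : ∀ ω : Sample d, u θ (zsOf ω) ω.2.1 ω.2.2 - ((ω.1.2 - ω.1.1)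
      - (ω.2.2 - ω.2.1) • totalDeriv (u θsg) (margVel ρ₀ ρ₁) (zsOf ω) ω.2.1 ω.2.2)
      = mfResidual ω.2 (zsOf ω) - ((ω.1.2 - ω.1.1) - margVel ρ₀ ρ₁ ω.2.2 (zsOf ω)) := fun ω => by
    simp only [mfResidual]; abel
  simp only [hsplit] at hCMF
  have hinner := integrable_inner_of_integrable_norm_sq hMF hRes hCMF
  have horth := integral_inner_sub_margVel_zsOf_eq_zero h₀ h₁ mfResidual hinner
  simp only [lossCMF, lossMF, hsplit]
  exact integral_norm_sub_sq_of_integral_inner_eq_zero hMF hRes hinner horth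

theorem stmt2_general {d : ℕ} {Θ : Type*} [NormedAddCommGroup Θ] [NormedSpace ℝ Θ]
    (ρ₀ ρ₁ : Measure (Euc d)) [IsProbabilityMeasure ρ₀] [IsProbabilityMeasure ρ₁]
    (hm₀ : Integrable (fun z => ‖z‖ ^ 2) ρ₀) (hm₁ : Integrable (fun z => ‖z‖ ^ 2) ρ₁)
    (π : Measure (ℝ × ℝ)) [IsProbabilityMeasure π]
    (u : Θ → Euc d → ℝ → ℝ → Euc d)
    (hintMF : ∀ θ θsg : Θ, Integrable (fun ω : Sample d =>
      ‖u θ (zsOf ω) ω.2.1 ω.2.2 - (margVel ρ₀ ρ₁ ω.2.2 (zsOf ω)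
        - (ω.2.2 - ω.2.1) • totalDeriv (u θsg) (margVel ρ₀ ρ₁) (zsOf ω) ω.2.1 ω.2.2)‖ ^ 2)
      ((ρ₀.prod ρ₁).prod π))
    (hintCMF : ∀ θ θsg : Θ, Integrable (fun ω : Sample d =>
      ‖u θ (zsOf ω) ω.2.1 ω.2.2 - ((ω.1.2 - ω.1.1)
        - (ω.2.2 - ω.2.1) • totalDeriv (u θsg) (margVel ρ₀ ρ₁) (zsOf ω) ω.2.1 ω.2.2)‖ ^ 2)
      ((ρ₀.prod ρ₁).prod π))
    (hintRes : Integrable (fun ω : Sample d =>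
      ‖(ω.1.2 - ω.1.1) - margVel ρ₀ ρ₁ ω.2.2 (zsOf ω)‖ ^ 2) ((ρ₀.prod ρ₁).prod π)) :
    (∀ θ θsg : Θ, lossCMF ρ₀ ρ₁ π u θ θsg = lossMF ρ₀ ρ₁ π u θ θsg
        + ∫ ω : Sample d, ‖(ω.1.2 - ω.1.1) - margVel ρ₀ ρ₁ ω.2.2 (zsOf ω)‖ ^ 2
            ∂((ρ₀.prod ρ₁).prod π)) ∧
    (∀ θ θsg : Θ, fderiv ℝ (fun ϑ => lossCMF ρ₀ ρ₁ π u ϑ θsg) θ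
        = fderiv ℝ (fun ϑ => lossMF ρ₀ ρ₁ π u ϑ θsg) θ) := by
  have decomposition := fun θ θsg =>
    lossCMF_eq_lossMF_add (integrable_id_of_integrable_norm_sq hm₀)
      (integrable_id_of_integrable_norm_sq hm₁) u θ θsg (hintMF θ θsg) (hintCMF θ θsg) hintRes
  refine ⟨decomposition, fun θ θsg => ?_⟩
  simp only [decomposition _ θsg]
  exact fderiv_add_const _

/-- Proposition: the CMF and MF losses differ by a θ-independent
constant, hence have identical gradients in θ.
`L_CMF(θ) = L_MF(θ) + 𝔼‖(z₁ − z₀) − v_s(z_s)‖²`, and `∇_θ L_CMF = ∇_θ L_MF`, where the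
stop-gradient is modeled by holding the parameter copy `θ̄` in the target fixed. -/
theorem stmt2 {d : ℕ} {Θ : Type*} [NormedAddCommGroup Θ] [NormedSpace ℝ Θ]
    (ρ₀ ρ₁ : Measure (Euc d)) [IsProbabilityMeasure ρ₀] [IsProbabilityMeasure ρ₁]
    (hm₀ : Integrable (fun z => ‖z‖ ^ 2) ρ₀) (hm₁ : Integrable (fun z => ‖z‖ ^ 2) ρ₁)
    (π : Measure (ℝ × ℝ)) [IsProbabilityMeasure π]
    (u : Θ → Euc d → ℝ → ℝ → Euc d)
    (hu : ∀ θ, ContDiff ℝ 1 (fun p : Euc d × ℝ × ℝ => u θ p.1 p.2.1 p.2.2))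
    (huθ : ∀ ω : Sample d, Differentiable ℝ (fun θ => u θ (zsOf ω) ω.2.1 ω.2.2))
    (hintMF : ∀ θ θsg : Θ, Integrable (fun ω : Sample d =>
      ‖u θ (zsOf ω) ω.2.1 ω.2.2 - (margVel ρ₀ ρ₁ ω.2.2 (zsOf ω)
        - (ω.2.2 - ω.2.1) • totalDeriv (u θsg) (margVel ρ₀ ρ₁) (zsOf ω) ω.2.1 ω.2.2)‖ ^ 2)
      ((ρ₀.prod ρ₁).prod π))
    (hintCMF : ∀ θ θsg : Θ, Integrable (fun ω : Sample d =>
      ‖u θ (zsOf ω) ω.2.1 ω.2.2 - ((ω.1.2 - ω.1.1)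
        - (ω.2.2 - ω.2.1) • totalDeriv (u θsg) (margVel ρ₀ ρ₁) (zsOf ω) ω.2.1 ω.2.2)‖ ^ 2)
      ((ρ₀.prod ρ₁).prod π))
    (hintRes : Integrable (fun ω : Sample d =>
      ‖(ω.1.2 - ω.1.1) - margVel ρ₀ ρ₁ ω.2.2 (zsOf ω)‖ ^ 2) ((ρ₀.prod ρ₁).prod π)) :
    (∀ θ θsg : Θ, lossCMF ρ₀ ρ₁ π u θ θsg = lossMF ρ₀ ρ₁ π u θ θsg
        + ∫ ω : Sample d, ‖(ω.1.2 - ω.1.1) - margVel ρ₀ ρ₁ ω.2.2 (zsOf ω)‖ ^ 2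
            ∂((ρ₀.prod ρ₁).prod π)) ∧
    (∀ θ θsg : Θ, fderiv ℝ (fun ϑ => lossCMF ρ₀ ρ₁ π u ϑ θsg) θ
        = fderiv ℝ (fun ϑ => lossMF ρ₀ ρ₁ π u ϑ θsg) θ) :=
  stmt2_general ρ₀ ρ₁ hm₀ hm₁ π u hintMF hintCMF hintRes

end
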